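/- In the path algebra Γ = FQ/⟨I⟩ of the doubled A_N quiver with relations x₁x₁* = 0, x_{N-1}* x_{N-1} = 0, xᵢ* xᵢ = x_{i+1} x_{i+1}*, every nonzero path from vertex i to vertex j of length k equals x_i x_{i+1} ⋯ x_{r-1} x_{r-1}* x_{r-2}* ⋯ x_j* where r = (k+i+j)/2, i.e., any path from i to j of a given length k is either zero or equal in Γ to this canonical 'up-then-down' path. -/
import Mathlib


/-! Path algebra of the doubled `A_N` quiver, modulo the Brauer-line relations
`x₁x₁* = 0`, `x_{N-1}*x_{N-1} = 0`, `xᵢ*xᵢ = x_{i+1}x_{i+1}*`.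
A path from vertex `i` is encoded by its list of steps (`true` = `x` going up,
`false` = `x*` going down, concatenation-of-paths convention). -/

/-- All vertices visited by the step list `L` starting at `i` lie in `{1, …, N}`. -/
def okSteps (N : ℕ) : ℤ → List Bool → Prop
  | i, [] => 1 ≤ i ∧ i ≤ (N : ℤ)
  | i, b :: L => 1 ≤ i ∧ i ≤ (N : ℤ) ∧ okSteps N (if b then i + 1 else i - 1) L

/-- The endpoint of the step list `L` starting at `i`. -/
def targetV : ℤ → List Bool → ℤ
  | i, [] => i
  | i, b :: L => targetV (if b then i + 1 else i - 1) L

/-- `L` encodes a path in the doubled `A_N` quiver from `i` to `j` of length `k`. -/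
def IsPathFrom (N : ℕ) (i j : ℤ) (k : ℕ) (L : List Bool) : Prop :=
  okSteps N i L ∧ targetV i L = j ∧ L.length = k

/-- The set of paths from `i` to `j` of length `k`, a basis of `e_i (FQ)_k e_j`. -/
def PathIdx (N : ℕ) (i j : ℤ) (k : ℕ) : Type :=
  {L : List Bool // IsPathFrom N i j k L}

/-- The relators spanning the degree-`k`, `(i,j)`-component of the ideal
`⟨x₁x₁*, x_{N-1}*x_{N-1}, xᵢ*xᵢ - x_{i+1}x_{i+1}*⟩` inside `e_i (FQ)_k e_j`:
a path containing `x₁x₁*` (up-down at vertex `1`) or `x_{N-1}*x_{N-1}` (down-up at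
vertex `N`) is a relator, and so is the difference of two paths related by swapping a
down-up at an interior vertex into the corresponding up-down. -/
def relators (F : Type*) [Field F] (N : ℕ) (i j : ℤ) (k : ℕ) :
    Set (PathIdx N i j k →₀ F) :=
  {v | ∃ A B : List Bool,
    (∃ h : IsPathFrom N i j k (A ++ [true, false] ++ B),
      targetV i A = 1 ∧ v = Finsupp.single ⟨A ++ [true, false] ++ B, h⟩ 1) ∨
    (∃ h : IsPathFrom N i j k (A ++ [false, true] ++ B),
      targetV i A = (N : ℤ) ∧ v = Finsupp.single ⟨A ++ [false, true] ++ B, h⟩ 1) ∨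
    (∃ (h1 : IsPathFrom N i j k (A ++ [false, true] ++ B))
        (h2 : IsPathFrom N i j k (A ++ [true, false] ++ B)),
      2 ≤ targetV i A ∧ targetV i A ≤ (N : ℤ) - 1 ∧
      v = Finsupp.single ⟨A ++ [false, true] ++ B, h1⟩ 1
          - Finsupp.single ⟨A ++ [true, false] ++ B, h2⟩ 1)}

/-- The component `e_i Γ_k e_j` of the quotient path algebra `Γ = FQ/⟨I⟩`. -/
def PathComp (F : Type*) [Field F] (N : ℕ) (i j : ℤ) (k : ℕ) :=
  (PathIdx N i j k →₀ F) ⧸ Submodule.span F (relators F N i j k)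

noncomputable instance (F : Type*) [Field F] (N : ℕ) (i j : ℤ) (k : ℕ) :
    AddCommGroup (PathComp F N i j k) :=
  Submodule.Quotient.addCommGroup _

noncomputable instance (F : Type*) [Field F] (N : ℕ) (i j : ℤ) (k : ℕ) :
    Module F (PathComp F N i j k) :=
  Submodule.Quotient.module _

/-- The class of a path in `e_i Γ_k e_j`. -/
noncomputable def pathClass (F : Type*) [Field F] {N : ℕ} {i j : ℤ} {k : ℕ} (p : PathIdx N i j k) :
    PathComp F N i j k :=
  Submodule.Quotient.mk (Finsupp.single p 1)


section Helpers

theorem okSteps_bounds {N : ℕ} {i : ℤ} {L : List Bool} (h : okSteps N i L) :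
    1 ≤ i ∧ i ≤ (N : ℤ) := by
  cases L with
  | nil => exact h
  | cons b L => exact ⟨h.1, h.2.1⟩

theorem targetV_append (i : ℤ) (A B : List Bool) :
    targetV i (A ++ B) = targetV (targetV i A) B := by
  induction A generalizing i with
  | nil => simp [targetV]
  | cons b A ih => simp [targetV, ih]

theorem okSteps_append {N : ℕ} {i : ℤ} {A B : List Bool} :
    okSteps N i (A ++ B) ↔ okSteps N i A ∧ okSteps N (targetV i A) B := by
  induction A generalizing i with
  | nil =>
    simp only [List.nil_append, targetV]
    exact ⟨fun h => ⟨okSteps_bounds h, h⟩, fun h => h.2⟩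
  | cons b A ih =>
    simp only [List.cons_append, okSteps, targetV, List.append_eq, ih]
    tauto

theorem targetV_count (i : ℤ) (L : List Bool) :
    targetV i L = i + L.count true - L.count false := by
  induction L generalizing i with
  | nil => simp [targetV]
  | cons b L ih =>
    cases b <;> simp [targetV, ih, List.count_cons] <;> push_cast <;> ring

/-- Number of inversions: pairs (false, …, true). -/
def invm : List Bool → ℕ
  | [] => 0
  | b :: L => invm L + if b then 0 else L.count true

theorem invm_append (A B : List Bool) :
    invm (A ++ B) = invm A + invm B + A.count false * B.count true := by
  induction A with
  | nil => simp [invm]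
  | cons b A ih =>
    cases b <;>
      simp [invm, ih, List.count_cons, List.count_append] <;> ring

theorem split_or_sorted (L : List Bool) :
    (∃ A B, L = A ++ [false, true] ++ B) ∨
    (∃ a b, L = List.replicate a true ++ List.replicate b false) := by
  induction L with
  | nil => exact Or.inr ⟨0, 0, rfl⟩
  | cons x L ih =>
    rcases ih with ⟨A, B, rfl⟩ | ⟨a, b, rfl⟩
    · exact Or.inl ⟨x :: A, B, rfl⟩
    · cases x
      · cases a with
        | zero => exact Or.inr ⟨0, b + 1, by simp [List.replicate_succ]⟩
        | succ a =>
          exact Or.inl ⟨[], List.replicate a true ++ List.replicate b false,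
            by simp [List.replicate_succ]⟩
      · exact Or.inr ⟨a + 1, b, by simp [List.replicate_succ]⟩

theorem main_reduction (F : Type*) [Field F] (N : ℕ) (i j : ℤ) (k : ℕ) :
    ∀ n (L : List Bool) (h : IsPathFrom N i j k L), invm L = n →
    pathClass F ⟨L, h⟩ = 0 ∨
    ∃ a b, ∃ h' : IsPathFrom N i j k
        (List.replicate a true ++ List.replicate b false),
      pathClass F ⟨L, h⟩ =
        pathClass F ⟨List.replicate a true ++ List.replicate b false, h'⟩ := by
  intro n
  induction n using Nat.strong_induction_on with
  | _ n IH =>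
  intro L h hn
  rcases split_or_sorted L with ⟨A, B, rfl⟩ | ⟨a, b, rfl⟩
  · -- L = A ++ [false, true] ++ B : rewrite or kill
    set v := targetV i A with hv
    have hok := h.1
    rw [List.append_assoc, okSteps_append] at hok
    obtain ⟨hA, hrest⟩ := hok
    -- hrest : okSteps N v ([false, true] ++ B)
    have h1v : 1 ≤ v := hrest.1
    have hvN : v ≤ (N : ℤ) := hrest.2.1
    have hrest2 := hrest.2.2
    simp only [if_neg Bool.false_ne_true] at hrest2
    have h2v : 2 ≤ v := by have := hrest2.1; omega
    have hvm1N : v - 1 ≤ (N : ℤ) := hrest2.2.1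
    have hB : okSteps N v B := by
      have := hrest2.2.2
      simpa using this
    by_cases hvtop : v = (N : ℤ)
    · -- relator 2: the path is zero
      left
      refine (Submodule.Quotient.mk_eq_zero _).mpr ?_
      refine Submodule.subset_span ?_
      exact ⟨A, B, Or.inr (Or.inl ⟨h, hvtop, rfl⟩)⟩
    · -- interior vertex: swap to up-down
      have hvN1 : v ≤ (N : ℤ) - 1 := by omega
      have h2 : IsPathFrom N i j k (A ++ [true, false] ++ B) := by
        refine ⟨?_, ?_, ?_⟩
        · rw [List.append_assoc, okSteps_append]
          refine ⟨hA, ?_⟩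
          show okSteps N v ([true, false] ++ B)
          refine ⟨h1v, hvN, ?_⟩
          simp only [if_pos rfl]
          refine ⟨by omega, by omega, ?_⟩
          show okSteps N (if false = true then v + 1 + 1 else v + 1 - 1) B
          simpa using hB
        · have ht := h.2.1
          rw [List.append_assoc, targetV_append] at ht ⊢
          rw [← hv] at ht ⊢
          have e1 : targetV v ([false, true] ++ B) = targetV v B := by
            simp [targetV]
          have e2 : targetV v ([true, false] ++ B) = targetV v B := by
            simp [targetV]
          rw [e2]; rw [e1] at ht; exact ht
        · have := h.2.2; simpa using this
      have hswap : pathClass F ⟨A ++ [false, true] ++ B, h⟩ =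
          pathClass F ⟨A ++ [true, false] ++ B, h2⟩ := by
        refine (Submodule.Quotient.eq _).mpr ?_
        refine Submodule.subset_span ?_
        exact ⟨A, B, Or.inr (Or.inr ⟨h, h2, h2v, hvN1, rfl⟩)⟩
      have hinvlt : invm (A ++ [true, false] ++ B) < n := by
        subst hn
        simp only [List.append_assoc, invm_append, List.count_append,
          List.count_cons, List.count_nil, invm]
        simp
      rcases IH _ hinvlt (A ++ [true, false] ++ B) h2 rfl with h0 | ⟨a, b, h', he⟩
      · exact Or.inl (hswap.trans h0)
      · exact Or.inr ⟨a, b, h', hswap.trans he⟩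
  · exact Or.inr ⟨a, b, h, rfl⟩

end Helpers

/-- Every path from `i` to `j` of length `k` is, in `Γ`, either zero or equal to the
canonical up-then-down path `x_i x_{i+1} ⋯ x_{r-1} x_{r-1}* ⋯ x_j*` with
`r = (k+i+j)/2`. -/
theorem stmt7 (F : Type*) [Field F] (N : ℕ) (hN : 1 ≤ N) (i j : ℤ)
    (hi : 1 ≤ i) (hiN : i ≤ (N : ℤ)) (hj : 1 ≤ j) (hjN : j ≤ (N : ℤ)) (k : ℕ)
    (r : ℤ) (hr : r = ((k : ℤ) + i + j) / 2)
    (c : List Bool)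
    (hc : c = List.replicate (r - i).toNat true ++ List.replicate (r - j).toNat false)
    (p : PathIdx N i j k) :
    pathClass F p = 0 ∨
      ∃ h : IsPathFrom N i j k c, pathClass F p = pathClass F ⟨c, h⟩ := by
  obtain ⟨L, h⟩ := p
  rcases main_reduction F N i j k (invm L) L h rfl with h0 | ⟨a, b, h', he⟩
  · exact Or.inl h0
  · -- identify the sorted path with c
    have hlen := h'.2.2
    have htgt := h'.2.1
    rw [targetV_count] at htgt
    simp only [List.length_append, List.length_replicate] at hlen
    simp only [List.count_append, List.count_replicate] at htgt
    simp at htgt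
    have ha : (r - i).toNat = a := by omega
    have hb : (r - j).toNat = b := by omega
    have hc' : c = List.replicate a true ++ List.replicate b false := by
      rw [hc, ha, hb]
    subst hc'
    exact Or.inr ⟨h', he⟩
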